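/- Let G be a finite connected graph. Then the strong resolving graph G_SR is a complete graph (on the vertex set ∂(G)) if and only if ∂(G) = σ(G), i.e., every boundary vertex of G is simplicial. -/

import Mathlib

/-!
A simplicial vertex `u` is maximally distant from every other vertex `v`: a neighbor of `u`
is either the next vertex of a geodesic from `u` to `v` or adjacent to it. Conversely, if
`u ∈ ∂(G)` has two non-adjacent neighbors `a` and `b`, extend a geodesic from `a` through `b`
as far as possible; its endpoint `c` is a boundary vertex with `d(c, u) ≤ d(c, b) + 1 < d(c, a)`,
so `u` is not maximally distant from `c`, and `u, c` are not adjacent in `G_SR`.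
-/

open SimpleGraph

variable {V : Type*}

/-- `u` is maximally distant from `v` in `G`: every neighbor `w` of `u`
satisfies `d(v,w) ≤ d(v,u)`. -/
def MaxDistant (G : SimpleGraph V) (u v : V) : Prop :=
  ∀ w, G.Adj u w → G.dist v w ≤ G.dist v u

/-- `u` and `v` are mutually maximally distant in `G`. -/
def MMD (G : SimpleGraph V) (u v : V) : Prop :=
  MaxDistant G u v ∧ MaxDistant G v u

/-- The boundary of `G`: vertices maximally distant from some vertex. -/
def boundary (G : SimpleGraph V) : Set V := {u | ∃ v, MaxDistant G u v}

/-- The strong resolving graph on the whole vertex set (`G_{SR+I}`):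
two vertices are adjacent iff they are distinct and mutually maximally distant. -/
def srGraphI (G : SimpleGraph V) : SimpleGraph V where
  Adj u v := u ≠ v ∧ MMD G u v
  symm := by
    constructor
    rintro u v ⟨hne, h1, h2⟩
    exact ⟨hne.symm, h2, h1⟩
  loopless := by
    constructor
    rintro u ⟨hne, _⟩
    exact hne rfl

/-- The strong resolving graph `G_SR`, with vertex set the boundary of `G`. -/
def srGraph (G : SimpleGraph V) : SimpleGraph (boundary G) :=
  (srGraphI G).induce (boundary G)

/-- `u` and `v` are true twins: distinct vertices with equal closed neighborhoods. -/
def TrueTwins (G : SimpleGraph V) (u v : V) : Prop :=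
  u ≠ v ∧ insert u (G.neighborSet u) = insert v (G.neighborSet v)

/-- `u` and `v` are false twins: distinct vertices with equal open neighborhoods. -/
def FalseTwins (G : SimpleGraph V) (u v : V) : Prop :=
  u ≠ v ∧ G.neighborSet u = G.neighborSet v

/-- A vertex is simplicial if its neighborhood induces a complete graph. -/
def IsSimplicial (G : SimpleGraph V) (v : V) : Prop :=
  ∀ a b, G.Adj v a → G.Adj v b → a ≠ b → G.Adj a b

/-- `w` strongly resolves `u` and `v`. -/
def StronglyResolves (G : SimpleGraph V) (w u v : V) : Prop :=
  G.dist w u = G.dist w v + G.dist v u ∨ G.dist w v = G.dist w u + G.dist u v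

/-- `S` is a strong metric generator for `G`. -/
def IsStrongMetricGenerator (G : SimpleGraph V) (S : Set V) : Prop :=
  ∀ u v : V, u ≠ v → ∃ w ∈ S, StronglyResolves G w u v

/-- The strong metric dimension of `G`. -/
noncomputable def sdim (G : SimpleGraph V) : ℕ :=
  sInf {n | ∃ S : Set V, S.ncard = n ∧ IsStrongMetricGenerator G S}

/-- `S` is a vertex cover of `H`. -/
def IsVertexCover (H : SimpleGraph V) (S : Set V) : Prop :=
  ∀ u v : V, H.Adj u v → u ∈ S ∨ v ∈ S

/-- The vertex cover number of `H`. -/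
noncomputable def vertexCoverNumber (H : SimpleGraph V) : ℕ :=
  sInf {n | ∃ S : Set V, S.ncard = n ∧ _root_.IsVertexCover H S}

/-- The graph `G*`: distinct vertices adjacent iff at distance at least two
or true twins. -/
def GStar (G : SimpleGraph V) : SimpleGraph V where
  Adj u v := u ≠ v ∧ (2 ≤ G.dist u v ∨ TrueTwins G u v)
  symm := by
    constructor
    rintro u v ⟨hne, h | h⟩
    · exact ⟨hne.symm, Or.inl (by rwa [G.dist_comm])⟩
    · exact ⟨hne.symm, Or.inr ⟨h.1.symm, h.2.symm⟩⟩
  loopless := by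
    constructor
    rintro u ⟨hne, _⟩
    exact hne rfl

/-- The direct (tensor) product of two graphs. -/
def DirectProd {α β : Type*} (G : SimpleGraph α) (H : SimpleGraph β) :
    SimpleGraph (α × β) where
  Adj x y := G.Adj x.1 y.1 ∧ H.Adj x.2 y.2
  symm := ⟨fun _ _ h => ⟨h.1.symm, h.2.symm⟩⟩
  loopless := ⟨fun x h => G.loopless.1 x.1 h.1⟩

/-- The strong product of two graphs. -/
def StrongProd {α β : Type*} (G : SimpleGraph α) (H : SimpleGraph β) :
    SimpleGraph (α × β) where
  Adj x y := x ≠ y ∧ (x.1 = y.1 ∨ G.Adj x.1 y.1) ∧ (x.2 = y.2 ∨ H.Adj x.2 y.2)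
  symm := by
    constructor
    rintro x y ⟨hne, h1, h2⟩
    exact ⟨hne.symm, h1.imp Eq.symm Adj.symm, h2.imp Eq.symm Adj.symm⟩
  loopless := by
    constructor
    rintro x ⟨hne, _⟩
    exact hne rfl

/-- The Cartesian sum (disjunctive product) of two graphs. -/
def CartSum {α β : Type*} (G : SimpleGraph α) (H : SimpleGraph β) :
    SimpleGraph (α × β) where
  Adj x y := G.Adj x.1 y.1 ∨ H.Adj x.2 y.2
  symm := ⟨fun _ _ h => h.imp Adj.symm Adj.symm⟩
  loopless := ⟨fun x h => h.elim (G.loopless.1 x.1) (H.loopless.1 x.2)⟩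

/-- The lexicographic product of two graphs. -/
def LexProd {α β : Type*} (G : SimpleGraph α) (H : SimpleGraph β) :
    SimpleGraph (α × β) where
  Adj x y := G.Adj x.1 y.1 ∨ (x.1 = y.1 ∧ H.Adj x.2 y.2)
  symm := ⟨fun _ _ h => h.imp Adj.symm (fun h => ⟨h.1.symm, h.2.symm⟩)⟩
  loopless := ⟨fun x h => h.elim (G.loopless.1 x.1) (fun h => H.loopless.1 x.2 h.2)⟩

/-- The disjoint union of `n` copies of the complete graph on `m` vertices. -/
def CopiesComplete (n m : ℕ) : SimpleGraph (Fin n × Fin m) where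
  Adj x y := x.1 = y.1 ∧ x.2 ≠ y.2
  symm := ⟨fun _ _ h => ⟨h.1.symm, h.2.symm⟩⟩
  loopless := ⟨fun x h => h.2 rfl⟩

/-- Every pair of vertices lies on a common cycle of length five. -/
def C5Connected (G : SimpleGraph V) : Prop :=
  ∀ u v : V, ∃ (w : V) (c : G.Walk w w), c.IsCycle ∧ c.length = 5 ∧
    u ∈ c.support ∧ v ∈ c.support

section

variable {G : SimpleGraph V}

lemma SimpleGraph.Adj.dist_le_dist_add_one {v w : V} (h : G.Adj v w) (u : V) :
    G.dist u w ≤ G.dist u v + 1 := by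
  simpa [dist_eq_one_iff_adj.2 h] using h.reachable.dist_triangle_right u

lemma IsSimplicial.maxDistant {u v : V} (hu : IsSimplicial G u) (hvu : v ≠ u) :
    MaxDistant G u v := by
  intro w huw
  by_cases hr : G.Reachable u v
  · obtain ⟨p, hp⟩ := hr.exists_walk_length_eq_dist
    cases p with
    | nil => exact absurd rfl hvu
    | @cons _ x _ hux q =>
      have hxv : G.dist v x ≤ q.length := dist_comm (G := G) ▸ dist_le q
      have hlen : q.length + 1 = G.dist v u := by rw [dist_comm]; simpa using hp
      rcases eq_or_ne w x with rfl | hwx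
      · omega
      · have := (hu x w hux huw hwx.symm).dist_le_dist_add_one v
        omega
  · -- `u` and `w` lie outside the component of `v`, where all distances are `0`
    have hvw : ¬G.Reachable v w := fun h => hr (h.trans huw.symm.reachable).symm
    simp [dist_eq_zero_of_not_reachable hvw]

lemma IsSimplicial.mem_boundary {u : V} (hu : IsSimplicial G u) : u ∈ boundary G := by
  by_cases h : ∃ w, G.Adj u w
  · obtain ⟨w, huw⟩ := h
    exact ⟨w, hu.maxDistant huw.ne.symm⟩
  · exact ⟨u, fun w huw => absurd ⟨w, huw⟩ h⟩

lemma exists_maxDistant_dist_eq_add [Finite V] {a b : V} (hab : G.Reachable a b) :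
    ∃ c, MaxDistant G c a ∧ G.dist a c = G.dist a b + G.dist b c := by
  let S : Set V := {z | G.dist a z = G.dist a b + G.dist b z}
  have hbS : b ∈ S := by simp [S]
  obtain ⟨c, hcS, hmax⟩ := S.exists_max_image (G.dist a) S.toFinite ⟨b, hbS⟩
  refine ⟨c, fun x hcx => ?_, hcS⟩
  by_contra! hlt
  have hxS : x ∈ S := by
    have h₁ := hcx.dist_le_dist_add_one a
    have h₂ := hcx.dist_le_dist_add_one b
    have h₃ := hab.dist_triangle_left x
    simp only [S, Set.mem_ofPred_eq] at hcS ⊢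
    omega
  exact absurd (hmax x hxS) (not_le.2 hlt)

lemma not_maxDistant_of_adj_of_dist_eq_add {u a b c : V} (hua : G.Adj u a) (hub : G.Adj u b)
    (hab : 2 ≤ G.dist a b) (hc : G.dist a c = G.dist a b + G.dist b c) :
    ¬MaxDistant G u c := by
  intro h
  have h₁ := h a hua
  have h₂ := hub.symm.dist_le_dist_add_one c
  have h₃ : G.dist c a = G.dist a c := dist_comm
  have h₄ : G.dist c b = G.dist b c := dist_comm
  omega

lemma isSimplicial_of_forall_maxDistant [Finite V] {u : V}
    (hu : ∀ c ∈ boundary G, c ≠ u → MaxDistant G u c) : IsSimplicial G u := by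
  intro a b hua hub hab
  by_contra hnadj
  have hreach : G.Reachable a b := hua.symm.reachable.trans hub.reachable
  have h₂ : 2 ≤ G.dist a b := hreach.one_lt_dist_of_ne_of_not_adj hab hnadj
  obtain ⟨c, hca, hc⟩ := exists_maxDistant_dist_eq_add hreach
  have hcu : c ≠ u := by
    rintro rfl
    have := dist_eq_one_iff_adj.2 hua.symm
    omega
  exact not_maxDistant_of_adj_of_dist_eq_add hua hub h₂ hc (hu c ⟨a, hca⟩ hcu)

lemma srGraph_eq_top_iff :
    srGraph G = ⊤ ↔ ∀ u ∈ boundary G, ∀ v ∈ boundary G, u ≠ v → MaxDistant G u v := by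
  constructor
  · intro h u hu v hv huv
    have hadj : (srGraph G).Adj ⟨u, hu⟩ ⟨v, hv⟩ := by simpa [h] using huv
    exact hadj.2.1
  · intro h
    ext ⟨u, hu⟩ ⟨v, hv⟩
    simp only [top_adj, ne_eq, Subtype.mk.injEq]
    exact ⟨fun huv => huv.1, fun huv => ⟨huv, h u hu v hv huv, h v hv u hu (Ne.symm huv)⟩⟩

end

theorem stmt3_general [Fintype V] (G : SimpleGraph V) :
    srGraph G = ⊤ ↔ boundary G = {v | IsSimplicial G v} := by
  rw [srGraph_eq_top_iff]
  constructor
  · intro h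
    ext u
    exact ⟨fun hu => isSimplicial_of_forall_maxDistant fun c hc hcu => h u hu c hc hcu.symm,
      IsSimplicial.mem_boundary⟩
  · intro h u hu v _ huv
    rw [h] at hu
    exact IsSimplicial.maxDistant hu huv.symm

theorem stmt3 [Fintype V] (G : SimpleGraph V) (hG : G.Connected) :
    srGraph G = ⊤ ↔ boundary G = {v | IsSimplicial G v} :=
  stmt3_general G
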